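/- arXiv:1501.04241 — 2 statements merged into one kernel-verified Lean document; each statement's English description precedes it below -/
import Mathlib

section
/- Fix a right-of-way parameter p ∈ (0,1) and nonnegative reals D₄, D₅ and S₆, let K = {(x,y) ∈ ℝ² : 0 ≤ x ≤ D₄, 0 ≤ y ≤ D₅, x + y ≤ S₆}, let Ω be the set of maximizers of x + y over K, and let R = {(x,y) ∈ ℝ² : x ≥ 0, y ≥ 0, (1−p)·x = p·y}. Then there exists a unique point (x*, y*) ∈ Ω minimizing the Euclidean distance to the set R over Ω, where the distance from a point z to R is inf{‖z − w‖₂ : w ∈ R}. -/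
/-- The feasible set of the merge junction model. -/
def mergeK (D4 D5 S6 : ℝ) : Set (ℝ × ℝ) :=
  {z | 0 ≤ z.1 ∧ z.1 ≤ D4 ∧ 0 ≤ z.2 ∧ z.2 ≤ D5 ∧ z.1 + z.2 ≤ S6}

/-- The set of maximizers of the total flow `x + y` over the feasible set. -/
def mergeOmega (D4 D5 S6 : ℝ) : Set (ℝ × ℝ) :=
  {z ∈ mergeK D4 D5 S6 | ∀ w ∈ mergeK D4 D5 S6, w.1 + w.2 ≤ z.1 + z.2}

/-- The priority ray `R = {(x,y) : x ≥ 0, y ≥ 0, (1 − p)·x = p·y}`. -/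
def priorityRay (p : ℝ) : Set (ℝ × ℝ) :=
  {z | 0 ≤ z.1 ∧ 0 ≤ z.2 ∧ (1 - p) * z.1 = p * z.2}

/-- The Euclidean distance between two points of the plane. -/
noncomputable def euclDist (z w : ℝ × ℝ) : ℝ :=
  Real.sqrt ((z.1 - w.1) ^ 2 + (z.2 - w.2) ^ 2)

/-- The Euclidean distance from a point to a set, `inf {‖z − w‖₂ : w ∈ R}`. -/
noncomputable def euclDistToSet (z : ℝ × ℝ) (R : Set (ℝ × ℝ)) : ℝ :=
  sInf (euclDist z '' R)

/-! On `Ω` the total flow is fixed at `c = min (D₄ + D₅) S₆`, so `Ω` is the segment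
`{(x, c - x) : max 0 (c - D₅) ≤ x ≤ min D₄ c}`. For a point `z` of the closed first quadrant and
`p ∈ [0, 1]`, the orthogonal projection of `z` on the line `(1 - p) x = p y` lies on the ray, so the
distance from `z` to the ray is `|(1 - p) z₁ - p z₂| / √(p² + (1 - p)²)`; along the segment this
is `|x - p c|` up to a positive factor. Minimizing `|x - p c|` over an interval has a unique
solution: two distinct minimizers would be symmetric about `p c`, which then lies between them. -/

open Set

lemma existsUnique_mem_Icc_abs_sub_le {a b : ℝ} (hab : a ≤ b) (t : ℝ) :
    ∃! x, x ∈ Icc a b ∧ ∀ y ∈ Icc a b, |x - t| ≤ |y - t| := by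
  obtain ⟨x, hx, hmin⟩ := isCompact_Icc.exists_isMinOn (nonempty_Icc.2 hab)
    (f := fun x => |x - t|) (by fun_prop)
  refine ⟨x, ⟨hx, fun y hy => hmin hy⟩, fun y ⟨hy, hymin⟩ => ?_⟩
  rcases abs_eq_abs.1 (le_antisymm (hymin x hx) (hmin hy)) with h | h
  · linarith
  · have ht : t ∈ Icc a b := ⟨by linarith [hx.1, hy.1], by linarith [hx.2, hy.2]⟩
    have hyt : |y - t| ≤ 0 := by simpa using hymin t ht
    linarith [abs_nonpos_iff.1 hyt]

lemma sq_add_one_sub_sq_pos (p : ℝ) : 0 < p ^ 2 + (1 - p) ^ 2 := by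
  nlinarith [sq_nonneg (2 * p - 1)]

section priorityRay

variable {p : ℝ} {z : ℝ × ℝ}

lemma abs_sub_le_euclDist_mul {w : ℝ × ℝ} (hw : w ∈ priorityRay p) :
    |(1 - p) * z.1 - p * z.2| ≤ euclDist z w * √(p ^ 2 + (1 - p) ^ 2) := by
  obtain ⟨-, -, hw⟩ := hw
  have key : (1 - p) * z.1 - p * z.2 = (1 - p) * (z.1 - w.1) - p * (z.2 - w.2) := by
    linear_combination hw
  rw [euclDist, ← Real.sqrt_mul (by positivity), ← Real.sqrt_sq_eq_abs, key]
  -- Cauchy–Schwarz, through Lagrange's identity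
  exact Real.sqrt_le_sqrt (by nlinarith [sq_nonneg (p * (z.1 - w.1) + (1 - p) * (z.2 - w.2))])

/-- The orthogonal projection of `z` on the line `(1 - p) x = p y`. -/
noncomputable def rayFoot (p : ℝ) (z : ℝ × ℝ) : ℝ × ℝ :=
  let s := (p * z.1 + (1 - p) * z.2) / (p ^ 2 + (1 - p) ^ 2)
  (s * p, s * (1 - p))

lemma rayFoot_mem_priorityRay (hp0 : 0 ≤ p) (hp1 : p ≤ 1) (hz1 : 0 ≤ z.1) (hz2 : 0 ≤ z.2) :
    rayFoot p z ∈ priorityRay p := by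
  have hs : 0 ≤ (p * z.1 + (1 - p) * z.2) / (p ^ 2 + (1 - p) ^ 2) := by
    have : 0 ≤ 1 - p := by linarith
    positivity
  exact ⟨mul_nonneg hs hp0, mul_nonneg hs (by linarith), by simp only [rayFoot]; ring⟩

lemma euclDist_rayFoot :
    euclDist z (rayFoot p z) = |(1 - p) * z.1 - p * z.2| / √(p ^ 2 + (1 - p) ^ 2) := by
  have hN := (sq_add_one_sub_sq_pos p).ne'
  have h : (z.1 - (rayFoot p z).1) ^ 2 + (z.2 - (rayFoot p z).2) ^ 2 =
      ((1 - p) * z.1 - p * z.2) ^ 2 / (p ^ 2 + (1 - p) ^ 2) := by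
    simp only [rayFoot]
    field_simp
    ring
  rw [euclDist, h, Real.sqrt_div (sq_nonneg _), Real.sqrt_sq_eq_abs]

lemma euclDistToSet_priorityRay (hp0 : 0 ≤ p) (hp1 : p ≤ 1) (hz1 : 0 ≤ z.1) (hz2 : 0 ≤ z.2) :
    euclDistToSet z (priorityRay p) =
      |(1 - p) * z.1 - p * z.2| / √(p ^ 2 + (1 - p) ^ 2) := by
  refine IsLeast.csInf_eq ⟨⟨rayFoot p z, rayFoot_mem_priorityRay hp0 hp1 hz1 hz2,
    euclDist_rayFoot⟩, ?_⟩
  rintro _ ⟨w, hw, rfl⟩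
  rw [div_le_iff₀ (Real.sqrt_pos.2 (sq_add_one_sub_sq_pos p))]
  exact abs_sub_le_euclDist_mul hw

end priorityRay

section mergeOmega

variable {D4 D5 S6 : ℝ} {z : ℝ × ℝ}

lemma sum_le_of_mem_mergeK (hz : z ∈ mergeK D4 D5 S6) : z.1 + z.2 ≤ min (D4 + D5) S6 := by
  obtain ⟨-, h1, -, h2, h3⟩ := hz
  exact le_min (by linarith) h3

lemma mem_mergeK_and_sum_eq_iff :
    z ∈ mergeK D4 D5 S6 ∧ z.1 + z.2 = min (D4 + D5) S6 ↔
      z.1 ∈ Icc (max 0 (min (D4 + D5) S6 - D5)) (min D4 (min (D4 + D5) S6)) ∧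
        z.2 = min (D4 + D5) S6 - z.1 := by
  set c := min (D4 + D5) S6
  have hcS : c ≤ S6 := min_le_right _ _
  simp only [mergeK, mem_Icc, max_le_iff, le_min_iff]
  constructor
  · rintro ⟨⟨h0, hD4, h0', hD5, -⟩, hc⟩
    exact ⟨⟨⟨h0, by linarith⟩, hD4, by linarith⟩, by linarith⟩
  · rintro ⟨⟨⟨h0, hD5⟩, hD4, hc⟩, h2⟩
    exact ⟨⟨h0, hD4, by linarith, by linarith, by linarith⟩, by linarith⟩

lemma merge_lower_le_upper (hD4 : 0 ≤ D4) (hD5 : 0 ≤ D5) (hS6 : 0 ≤ S6) :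
    max 0 (min (D4 + D5) S6 - D5) ≤ min D4 (min (D4 + D5) S6) := by
  have hcD : min (D4 + D5) S6 ≤ D4 + D5 := min_le_left _ _
  have hc : 0 ≤ min (D4 + D5) S6 := le_min (by linarith) hS6
  exact max_le (le_min hD4 hc) (le_min (by linarith) (by linarith))

lemma mem_mergeOmega_iff_sum_eq (hD4 : 0 ≤ D4) (hD5 : 0 ≤ D5) (hS6 : 0 ≤ S6) :
    z ∈ mergeOmega D4 D5 S6 ↔ z ∈ mergeK D4 D5 S6 ∧ z.1 + z.2 = min (D4 + D5) S6 := by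
  set c := min (D4 + D5) S6
  obtain ⟨hwK, hw⟩ : ((min D4 c, c - min D4 c) : ℝ × ℝ) ∈ mergeK D4 D5 S6 ∧
      min D4 c + (c - min D4 c) = c :=
    mem_mergeK_and_sum_eq_iff.2 ⟨right_mem_Icc.2 (merge_lower_le_upper hD4 hD5 hS6), rfl⟩
  exact ⟨fun ⟨hzK, hmax⟩ => ⟨hzK, le_antisymm (sum_le_of_mem_mergeK hzK) (hw ▸ hmax _ hwK)⟩,
    fun ⟨hzK, hz⟩ => ⟨hzK, fun w hw => hz ▸ sum_le_of_mem_mergeK hw⟩⟩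

lemma mem_mergeOmega_iff (hD4 : 0 ≤ D4) (hD5 : 0 ≤ D5) (hS6 : 0 ≤ S6) :
    z ∈ mergeOmega D4 D5 S6 ↔
      z.1 ∈ Icc (max 0 (min (D4 + D5) S6 - D5)) (min D4 (min (D4 + D5) S6)) ∧
        z.2 = min (D4 + D5) S6 - z.1 :=
  (mem_mergeOmega_iff_sum_eq hD4 hD5 hS6).trans mem_mergeK_and_sum_eq_iff

lemma euclDistToSet_priorityRay_of_mem_mergeOmega {p : ℝ} (hp0 : 0 ≤ p) (hp1 : p ≤ 1)
    (hD4 : 0 ≤ D4) (hD5 : 0 ≤ D5) (hS6 : 0 ≤ S6) (hz : z ∈ mergeOmega D4 D5 S6) :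
    euclDistToSet z (priorityRay p) =
      |z.1 - p * min (D4 + D5) S6| / √(p ^ 2 + (1 - p) ^ 2) := by
  obtain ⟨⟨hz1, -, hz2, -⟩, hc⟩ := (mem_mergeOmega_iff_sum_eq hD4 hD5 hS6).1 hz
  rw [euclDistToSet_priorityRay hp0 hp1 hz1 hz2, ← hc]
  congr 2
  ring

lemma euclDistToSet_le_iff_of_mem_mergeOmega {p : ℝ} (hp0 : 0 ≤ p) (hp1 : p ≤ 1)
    (hD4 : 0 ≤ D4) (hD5 : 0 ≤ D5) (hS6 : 0 ≤ S6) {w : ℝ × ℝ}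
    (hz : z ∈ mergeOmega D4 D5 S6) (hw : w ∈ mergeOmega D4 D5 S6) :
    euclDistToSet z (priorityRay p) ≤ euclDistToSet w (priorityRay p) ↔
      |z.1 - p * min (D4 + D5) S6| ≤ |w.1 - p * min (D4 + D5) S6| := by
  rw [euclDistToSet_priorityRay_of_mem_mergeOmega hp0 hp1 hD4 hD5 hS6 hz,
    euclDistToSet_priorityRay_of_mem_mergeOmega hp0 hp1 hD4 hD5 hS6 hw,
    div_le_div_iff_of_pos_right (Real.sqrt_pos.2 (sq_add_one_sub_sq_pos p))]

end mergeOmega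

/-- There exists a unique point of `Ω` minimizing the Euclidean distance to the
priority ray `R`: the merge solution is well defined. -/
theorem merge_projection_unique
    (p D4 D5 S6 : ℝ) (hp0 : 0 < p) (hp1 : p < 1)
    (hD4 : 0 ≤ D4) (hD5 : 0 ≤ D5) (hS6 : 0 ≤ S6) :
    ∃! z : ℝ × ℝ, z ∈ mergeOmega D4 D5 S6 ∧
      ∀ w ∈ mergeOmega D4 D5 S6,
        euclDistToSet z (priorityRay p) ≤ euclDistToSet w (priorityRay p) := by
  have hΩ := fun z => mem_mergeOmega_iff (z := z) hD4 hD5 hS6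
  have hle {z w : ℝ × ℝ} :=
    euclDistToSet_le_iff_of_mem_mergeOmega (z := z) (w := w) hp0.le hp1.le hD4 hD5 hS6
  set c := min (D4 + D5) S6
  obtain ⟨x, ⟨hx, hxmin⟩, hxuniq⟩ :=
    existsUnique_mem_Icc_abs_sub_le (merge_lower_le_upper hD4 hD5 hS6) (p * c)
  have hxΩ : (x, c - x) ∈ mergeOmega D4 D5 S6 := (hΩ _).2 ⟨hx, rfl⟩
  refine ⟨(x, c - x), ⟨hxΩ, fun w hw => (hle hxΩ hw).2 (hxmin _ ((hΩ w).1 hw).1)⟩, ?_⟩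
  rintro z ⟨hz, hzmin⟩
  obtain ⟨hz1, hz2⟩ := (hΩ z).1 hz
  have hzx : z.1 = x :=
    hxuniq _ ⟨hz1, fun y hy => ((hle hz hxΩ).1 (hzmin _ hxΩ)).trans (hxmin y hy)⟩
  exact Prod.ext hzx (by rw [hz2, hzx])
end

section
/- Let α₂, α₃, α₂′, α₃′ ∈ (0,1) with α₂ + α₃ = 1 and α₂′ + α₃′ = 1. Set q = (1, α₂, α₃), q′ = (1, α₂′, α₃′), and Q_{ij} = q_j/q_i, Q′_{ij} = q′_j/q′_i for i, j ∈ {1,2,3}. Then for every i, j ∈ {1,2,3} there exist A ∈ {1, α₂/α₂′, (α₂/α₂′)·(α₃′/α₃)} and a matrix M ∈ {Q, Q′} such that Q_{i2} · Q′_{2j} = A · M_{ij}. -/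
/-!
Going through the middle link multiplies by `q₂ / qᵢ` and then by `q'ⱼ / q'₂`. Against the
direct factor `Q'ᵢⱼ = q'ⱼ / q'ᵢ` this differs by `A = (q₂ / q'₂) · (q'ᵢ / qᵢ)`, which for
`i = 1, 2, 3` is `α₂/α₂'`, `1` and `(α₂/α₂')·(α₃'/α₃)`.
-/

theorem div_mul_div_eq_mul_div_of_ne_zero {ι K : Type*} [Field K] (q q' : ι → K) (i k j : ι)
    (hi : q' i ≠ 0) :
    q k / q i * (q' j / q' k) = q k / q' k * (q' i / q i) * (q' j / q' i) := by
  field_simp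

theorem middle_link_elimination_general
    (α₂ α₃ α₂' α₃' : ℝ)
    (h2 : α₂ ∈ Set.Ioo (0 : ℝ) 1)
    (h2' : α₂' ∈ Set.Ioo (0 : ℝ) 1) (h3' : α₃' ∈ Set.Ioo (0 : ℝ) 1)
    (q q' : Fin 3 → ℝ) (hq : q = ![1, α₂, α₃]) (hq' : q' = ![1, α₂', α₃'])
    (Q Q' : Fin 3 → Fin 3 → ℝ)
    (hQ : ∀ i j, Q i j = q j / q i) (hQ' : ∀ i j, Q' i j = q' j / q' i) :
    ∀ i j : Fin 3, ∃ A ∈ ({1, α₂ / α₂', (α₂ / α₂') * (α₃' / α₃)} : Set ℝ),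
      ∃ M : Fin 3 → Fin 3 → ℝ, (M = Q ∨ M = Q') ∧
        Q i 1 * Q' 1 j = A * M i j := by
  intro i j
  have hq'_ne : q' i ≠ 0 := by
    subst hq'
    fin_cases i
    exacts [one_ne_zero, h2'.1.ne', h3'.1.ne']
  refine ⟨q 1 / q' 1 * (q' i / q i), ?_, Q', Or.inr rfl, ?_⟩
  · subst hq hq'
    fin_cases i <;> simp [h2.1.ne', h2'.1.ne']
  · rw [hQ, hQ', hQ']
    exact div_mul_div_eq_mul_div_of_ne_zero q q' i 1 j hq'_ne

/-- Factorization identity (Step 3 of the proof of Theorem 1) eliminating the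
middle link `I₂` from a sequence of wave-junction interactions: with `Q`, `Q'`
the matrices of tangent-vector multiplication factors for turning ratios
`(α₂, α₃)` and `(α₂', α₃')` respectively, the combined factor through the
middle link satisfies `Q i 2 · Q' 2 j = A · M i j` for some
`A ∈ {1, α₂/α₂', (α₂/α₂')·(α₃'/α₃)}` and `M ∈ {Q, Q'}`. -/
theorem middle_link_elimination
    (α₂ α₃ α₂' α₃' : ℝ)
    (h2 : α₂ ∈ Set.Ioo (0 : ℝ) 1) (h3 : α₃ ∈ Set.Ioo (0 : ℝ) 1)
    (h2' : α₂' ∈ Set.Ioo (0 : ℝ) 1) (h3' : α₃' ∈ Set.Ioo (0 : ℝ) 1)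
    (hsum : α₂ + α₃ = 1) (hsum' : α₂' + α₃' = 1)
    (q q' : Fin 3 → ℝ) (hq : q = ![1, α₂, α₃]) (hq' : q' = ![1, α₂', α₃'])
    (Q Q' : Fin 3 → Fin 3 → ℝ)
    (hQ : ∀ i j, Q i j = q j / q i) (hQ' : ∀ i j, Q' i j = q' j / q' i) :
    ∀ i j : Fin 3, ∃ A ∈ ({1, α₂ / α₂', (α₂ / α₂') * (α₃' / α₃)} : Set ℝ),
      ∃ M : Fin 3 → Fin 3 → ℝ, (M = Q ∨ M = Q') ∧
        Q i 1 * Q' 1 j = A * M i j :=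
  middle_link_elimination_general α₂ α₃ α₂' α₃' h2 h2' h3' q q' hq hq' Q Q' hQ hQ'
end
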